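/- arXiv:1911.07638 — 5 statements merged into one kernel-verified Lean document; each statement's English description precedes it below -/
import Mathlib

section
/- Let A : X → Y be a bounded injective linear operator between Hilbert spaces whose range R(A) is dense in Y but not closed. Then there exists b ∈ Y with b ∉ R(A), and for any sequence of finite-dimensional subspaces Y_n ⊆ Y with orthogonal projections Q_n → I strongly, and invertible Galerkin operators A_n : X_n → Y_n satisfying sup_n ‖A_n⁻¹Q_nA‖ < ∞, one has ‖A_n⁻¹Q_n b‖ → ∞ as n → ∞. -/
open Filter

/-!
If `‖A_n⁻¹Q_n b‖ ≤ M` for infinitely many `n`, then with `u_n = A_n⁻¹Q_n b` the Galerkin equation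
`Q_n A u_n = Q_n b` and the symmetry of `Q_n` give `⟪Q_n b, y⟫ = ⟪u_n, A* Q_n y⟫`, hence in the limit
`‖⟪b, y⟫‖ ≤ M ‖A* y‖` for all `y`. So `A* y ↦ ⟪b, y⟫` is a bounded functional on the range of `A*`;
extending it by Hahn–Banach and representing it by Riesz yields `x` with `A x = b`. Since a
non-closed range is a proper subspace, some `b` lies outside it, and for that `b` the Galerkin
solutions must diverge.
-/

open scoped InnerProductSpace Topology

section

variable {𝕜 E F : Type*} [RCLike 𝕜]

theorem LinearMap.exists_strongDual_comp_eq_of_norm_le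
    [SeminormedAddCommGroup E] [NormedSpace 𝕜 E] [AddCommGroup F] [Module 𝕜 F]
    (B : F →ₗ[𝕜] E) (f : F →ₗ[𝕜] 𝕜) (M : ℝ) (hf : ∀ y, ‖f y‖ ≤ M * ‖B y‖) :
    ∃ g : StrongDual 𝕜 E, ∀ y, g (B y) = f y := by
  have hker : LinearMap.ker B ≤ LinearMap.ker f := fun y hy => by
    simpa [LinearMap.mem_ker.1 hy] using hf y
  let g₀ : LinearMap.range B →ₗ[𝕜] 𝕜 :=
    (LinearMap.ker B).liftQ f hker ∘ₗ B.quotKerEquivRange.symm.toLinearMap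
  have hg₀ : ∀ y, g₀ ⟨B y, LinearMap.mem_range_self B y⟩ = f y := fun y => by
    simp [g₀, LinearMap.quotKerEquivRange_symm_apply_image]
  have hbound : ∀ w, ‖g₀ w‖ ≤ M * ‖w‖ := by
    rintro ⟨_, y, rfl⟩
    simpa [hg₀] using hf y
  obtain ⟨g, hg, -⟩ := exists_extension_norm_eq _ (g₀.mkContinuous M hbound)
  exact ⟨g, fun y => (hg ⟨B y, LinearMap.mem_range_self B y⟩).trans (hg₀ y)⟩

variable [NormedAddCommGroup E] [InnerProductSpace 𝕜 E]
  [NormedAddCommGroup F] [InnerProductSpace 𝕜 F]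

theorem LinearMap.isSymmetric_of_sub_mem_orthogonal (K : Submodule 𝕜 E) (T : E →ₗ[𝕜] E)
    (hmem : ∀ x, T x ∈ K) (horth : ∀ x, x - T x ∈ Kᗮ) : T.IsSymmetric := by
  intro x y
  have hx := (K.mem_orthogonal' _).1 (horth x) _ (hmem y)
  have hy := (K.mem_orthogonal _).1 (horth y) _ (hmem x)
  rw [inner_sub_left, sub_eq_zero] at hx
  rw [inner_sub_right, sub_eq_zero] at hy
  rw [hx, hy]

variable [CompleteSpace E] [CompleteSpace F]

theorem ContinuousLinearMap.mem_range_of_norm_inner_le (A : E →L[𝕜] F) (b : F) (M : ℝ)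
    (h : ∀ y, ‖⟪b, y⟫_𝕜‖ ≤ M * ‖adjoint A y‖) : b ∈ Set.range A := by
  obtain ⟨g, hg⟩ := LinearMap.exists_strongDual_comp_eq_of_norm_le
    (adjoint A : F →ₗ[𝕜] E) (innerSL 𝕜 b : F →ₗ[𝕜] 𝕜) M h
  refine ⟨(InnerProductSpace.toDual 𝕜 E).symm g, ext_inner_right 𝕜 fun y => ?_⟩
  rw [← adjoint_inner_right, InnerProductSpace.toDual_symm_apply]
  exact hg y

theorem ContinuousLinearMap.mem_range_of_frequently_bounded_projected_solution
    {ι : Type*} {l : Filter ι} (A : E →L[𝕜] F) (Q : ι → F →L[𝕜] F)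
    (hQ : ∀ i, (Q i : F →ₗ[𝕜] F).IsSymmetric) (hQlim : ∀ y, Tendsto (fun i => Q i y) l (𝓝 y))
    (b : F) (u : ι → E) (hu : ∀ i, Q i (A (u i)) = Q i b) (M : ℝ)
    (hbdd : ∃ᶠ i in l, ‖u i‖ ≤ M) : b ∈ Set.range A := by
  refine A.mem_range_of_norm_inner_le b M fun y => ?_
  have hproj : ∀ i, ‖u i‖ ≤ M → ‖⟪Q i b, y⟫_𝕜‖ ≤ M * ‖adjoint A (Q i y)‖ := fun i hi =>
    calc ‖⟪Q i b, y⟫_𝕜‖ = ‖⟪u i, adjoint A (Q i y)⟫_𝕜‖ := by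
          rw [adjoint_inner_right, ← hu i]; exact congrArg _ (hQ i _ _)
      _ ≤ ‖u i‖ * ‖adjoint A (Q i y)‖ := norm_inner_le_norm _ _
      _ ≤ M * ‖adjoint A (Q i y)‖ := by gcongr
  exact le_of_tendsto_of_tendsto_of_frequently ((hQlim b).inner tendsto_const_nhds).norm
    ((((adjoint A).continuous.tendsto y).comp (hQlim y)).norm.const_mul M)
    (hbdd.mono hproj)

end

theorem unified_divergence_general
    {X Y : Type*}
    [NormedAddCommGroup X] [InnerProductSpace ℂ X] [CompleteSpace X]
    [NormedAddCommGroup Y] [InnerProductSpace ℂ Y] [CompleteSpace Y]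
    (A : X →L[ℂ] Y) (hnotclosed : ¬ IsClosed (Set.range A)) :
    ∃ b : Y, b ∉ Set.range A ∧
      ∀ (Xn : ℕ → Submodule ℂ X) (Yn : ℕ → Submodule ℂ Y)
        (P : ℕ → X →L[ℂ] X) (Q : ℕ → Y →L[ℂ] Y) (R : ℕ → Y →L[ℂ] X),
        (∀ n, FiniteDimensional ℂ (Xn n)) →
        (∀ n, FiniteDimensional ℂ (Yn n)) →
        -- P n is the orthogonal projection onto Xn n :
        (∀ n x, P n x ∈ Xn n) →
        (∀ n x, x - P n x ∈ (Xn n)ᗮ) →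
        -- Q n is the orthogonal projection onto Yn n :
        (∀ n y, Q n y ∈ Yn n) →
        (∀ n y, y - Q n y ∈ (Yn n)ᗮ) →
        -- strong convergence of the projections to the identity :
        (∀ x : X, Tendsto (fun n => P n x) atTop (nhds x)) →
        (∀ y : Y, Tendsto (fun n => Q n y) atTop (nhds y)) →
        -- R n encodes A_n⁻¹ Q_n, where A_n = Q_n A P_n : X_n → Y_n is invertible :
        (∀ n y, R n y ∈ Xn n) →
        (∀ n y, R n (Q n y) = R n y) →
        (∀ n, ∀ x ∈ Xn n, R n (A x) = x) →
        (∀ n y, Q n (A (R n y)) = Q n y) →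
        -- uniform boundedness `sup_n ‖A_n⁻¹ Q_n A‖ < ∞` :
        (∃ C : ℝ, ∀ n, ‖(R n).comp A‖ ≤ C) →
        Tendsto (fun n => ‖R n b‖) atTop atTop := by
  obtain ⟨b, hb⟩ : ∃ b, b ∉ Set.range A := by
    by_contra! h
    exact hnotclosed (Set.eq_univ_of_forall h ▸ isClosed_univ)
  refine ⟨b, hb, fun Xn Yn P Q R _ _ _ _ hQmem hQorth _ hQlim _ _ _ hQAR _ => ?_⟩
  by_contra hdiv
  simp only [tendsto_atTop, not_forall, not_eventually, not_le] at hdiv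
  obtain ⟨M, hM⟩ := hdiv
  exact hb <| A.mem_range_of_frequently_bounded_projected_solution Q
    (fun n => LinearMap.isSymmetric_of_sub_mem_orthogonal _ _ (hQmem n) (hQorth n)) hQlim
    b (fun n => R n b) (fun n => hQAR n b) M (hM.mono fun _ => le_of_lt)

/-- unified divergence principle: Let `A : X → Y` be a bounded injective
linear operator between Hilbert spaces with dense, non-closed range. Then there is
`b ∈ Y \ R(A)` such that for every sequence of finite-dimensional subspaces
`X_n ⊆ X`, `Y_n ⊆ Y` with orthogonal projections `P_n → I`, `Q_n → I` strongly,
and invertible Galerkin operators `A_n := Q_n A P_n : X_n → Y_n` (whose inverses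
composed with `Q_n` are encoded by the operators `R_n = A_n⁻¹Q_n`) satisfying
`sup_n ‖A_n⁻¹Q_nA‖ < ∞`, one has `‖A_n⁻¹Q_n b‖ → ∞`. -/
theorem unified_divergence
    {X Y : Type*}
    [NormedAddCommGroup X] [InnerProductSpace ℂ X] [CompleteSpace X]
    [NormedAddCommGroup Y] [InnerProductSpace ℂ Y] [CompleteSpace Y]
    (A : X →L[ℂ] Y) (hinj : Function.Injective A)
    (hdense : DenseRange A) (hnotclosed : ¬ IsClosed (Set.range A)) :
    ∃ b : Y, b ∉ Set.range A ∧
      ∀ (Xn : ℕ → Submodule ℂ X) (Yn : ℕ → Submodule ℂ Y)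
        (P : ℕ → X →L[ℂ] X) (Q : ℕ → Y →L[ℂ] Y) (R : ℕ → Y →L[ℂ] X),
        (∀ n, FiniteDimensional ℂ (Xn n)) →
        (∀ n, FiniteDimensional ℂ (Yn n)) →
        -- P n is the orthogonal projection onto Xn n :
        (∀ n x, P n x ∈ Xn n) →
        (∀ n x, x - P n x ∈ (Xn n)ᗮ) →
        -- Q n is the orthogonal projection onto Yn n :
        (∀ n y, Q n y ∈ Yn n) →
        (∀ n y, y - Q n y ∈ (Yn n)ᗮ) →
        -- strong convergence of the projections to the identity :
        (∀ x : X, Tendsto (fun n => P n x) atTop (nhds x)) →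
        (∀ y : Y, Tendsto (fun n => Q n y) atTop (nhds y)) →
        -- R n encodes A_n⁻¹ Q_n, where A_n = Q_n A P_n : X_n → Y_n is invertible :
        (∀ n y, R n y ∈ Xn n) →
        (∀ n y, R n (Q n y) = R n y) →
        (∀ n, ∀ x ∈ Xn n, R n (A x) = x) →
        (∀ n y, Q n (A (R n y)) = Q n y) →
        -- uniform boundedness `sup_n ‖A_n⁻¹ Q_n A‖ < ∞` :
        (∃ C : ℝ, ∀ n, ‖(R n).comp A‖ ≤ C) →
        Tendsto (fun n => ‖R n b‖) atTop atTop :=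
  unified_divergence_general A hnotclosed
end

section
/- Let K : X → Y be bounded, injective between Hilbert spaces with dense range, Y_n ⊆ Y finite-dimensional with ∪_n Y_n dense in Y and X_n := K*(Y_n). Then the dual least squares operator K_n := Q_n K P_n : X_n → Y_n is invertible for each n, where P_n, Q_n are the orthogonal projections onto X_n, Y_n. -/
/-!
If `x = K* y` with `y ∈ Yₙ` and `Qₙ K x = 0`, then `‖x‖² = ⟪y, K x⟫ = 0`, so the dual least
squares operator is injective. Dense range of `K` makes `K*` injective, hence
`dim Xₙ = dim Yₙ < ∞` and injectivity gives bijectivity.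
-/

section

open ContinuousLinearMap

variable {𝕜 X Y : Type*} [RCLike 𝕜]
  [NormedAddCommGroup X] [InnerProductSpace 𝕜 X] [CompleteSpace X]
  [NormedAddCommGroup Y] [InnerProductSpace 𝕜 Y] [CompleteSpace Y]

theorem ContinuousLinearMap.injective_adjoint_of_denseRange {T : X →L[𝕜] Y}
    (hT : DenseRange T) : Function.Injective (adjoint T) := by
  have hclosure : T.range.topologicalClosure = ⊤ :=
    Submodule.dense_iff_topologicalClosure_eq_top.mp hT
  rw [Submodule.topologicalClosure_eq_top_iff, orthogonal_range] at hclosure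
  rw [← coe_coe, ← LinearMap.ker_eq_bot]
  exact hclosure

namespace ContinuousLinearMap

variable (K : X →L[𝕜] Y) (V : Submodule 𝕜 Y) [V.HasOrthogonalProjection]

/-- `Q K` restricted to `K*(V)`, with `Q` the orthogonal projection onto `V`; on `K*(V)` the
projection `P` of the paper's `Q K P` is the identity. -/
noncomputable def dualLeastSquares : V.map (adjoint K).toLinearMap →ₗ[𝕜] V :=
  V.orthogonalProjectionOnto.toLinearMap ∘ₗ K.toLinearMap ∘ₗ
    (V.map (adjoint K).toLinearMap).subtype

theorem dualLeastSquares_injective : Function.Injective (K.dualLeastSquares V) := by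
  rw [← LinearMap.ker_eq_bot, Submodule.eq_bot_iff]
  rintro ⟨x, y, hy, rfl⟩ hx
  have hKx : K (adjoint K y) ∈ Vᗮ := Submodule.orthogonalProjectionOnto_eq_zero_iff.mp hx
  have hself : inner 𝕜 (adjoint K y) (adjoint K y) = 0 := by
    rw [adjoint_inner_left]
    exact (Submodule.mem_orthogonal V _).mp hKx y hy
  exact Subtype.ext (inner_self_eq_zero.mp hself)

theorem dualLeastSquares_bijective [FiniteDimensional 𝕜 V]
    (hK : Function.Injective (adjoint K)) : Function.Bijective (K.dualLeastSquares V) := by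
  have hdim : Module.finrank 𝕜 (V.map (adjoint K).toLinearMap) = Module.finrank 𝕜 V :=
    (V.equivMapOfInjective _ hK).finrank_eq.symm
  have hinj := K.dualLeastSquares_injective V
  exact ⟨hinj, (LinearMap.injective_iff_surjective_of_finrank_eq_finrank hdim).mp hinj⟩

end ContinuousLinearMap

end

theorem dual_least_squares_invertible_general
    {X Y : Type*}
    [NormedAddCommGroup X] [InnerProductSpace ℂ X] [CompleteSpace X]
    [NormedAddCommGroup Y] [InnerProductSpace ℂ Y] [CompleteSpace Y]
    (K : X →L[ℂ] Y) (hdense : DenseRange K)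
    (Yn : ℕ → Submodule ℂ Y) [∀ n, FiniteDimensional ℂ (Yn n)]
    (n : ℕ) :
    Function.Bijective
      (fun x : ((Yn n).map (ContinuousLinearMap.adjoint K).toLinearMap) =>
        (Yn n).orthogonalProjectionOnto (K x)) :=
  K.dualLeastSquares_bijective (Yn n) (K.injective_adjoint_of_denseRange hdense)

/-- dual least squares, unique solvability: Let `K : X → Y` be bounded,
injective between Hilbert spaces with dense range, `Y_n ⊆ Y` finite-dimensional with
`∪_n Y_n` dense in `Y`, and `X_n := K*(Y_n)`. Then the dual least squares operator
`K_n := Q_n K P_n : X_n → Y_n` (which on `X_n` equals `x ↦ Q_n K x`) is invertible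
for each `n`, `Q_n` being the orthogonal projection onto `Y_n`. -/
theorem dual_least_squares_invertible
    {X Y : Type*}
    [NormedAddCommGroup X] [InnerProductSpace ℂ X] [CompleteSpace X]
    [NormedAddCommGroup Y] [InnerProductSpace ℂ Y] [CompleteSpace Y]
    (K : X →L[ℂ] Y) (hinj : Function.Injective K) (hdense : DenseRange K)
    (Yn : ℕ → Submodule ℂ Y) [∀ n, FiniteDimensional ℂ (Yn n)]
    (hYdense : Dense (⋃ n, (Yn n : Set Y))) (n : ℕ) :
    Function.Bijective
      (fun x : ((Yn n).map (ContinuousLinearMap.adjoint K).toLinearMap) =>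
        (Yn n).orthogonalProjectionOnto (K x)) :=
  dual_least_squares_invertible_general K hdense Yn n
end

section
/- Let A : X → Y be bounded and injective between Hilbert spaces, X_n ⊆ X finite-dimensional, Y_n := A(X_n). Suppose there exists τ > 0 with min_{z_n ∈ X_n} (‖x − z_n‖ + σ_n ‖A(x − z_n)‖) ≤ τ‖x‖ for all x ∈ X, where σ_n := max{‖z_n‖ : z_n ∈ X_n, ‖A z_n‖ = 1}. Then the least squares operator A_n := Q_n A|_{X_n} : X_n → Y_n is invertible and ‖A_n⁻¹ Q_n‖_{Y→X} ≤ σ_n, and for b = Ax with x ∈ X: ‖x − A_n⁻¹Q_n b‖ ≤ (τ+1) min{‖x − z_n‖ : z_n ∈ X_n}. -/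
/-! The maximality of `σ` is the inverse estimate `‖z‖ ≤ σ ‖A z‖` on `X_n`. Since `Q_n` is a
contraction, it gives unique solvability of the least squares equation and `‖u‖ ≤ σ ‖b‖`.
For `b = A x` and `z ∈ X_n` we have `A (z - u) = Q_n (A (z - x))`, hence
`‖x - u‖ ≤ ‖x - z‖ + σ ‖A (x - z)‖`; replacing `z` by `z + w`, where `w ∈ X_n` is the
approximant of `x - z` supplied by the hypothesis, bounds this by `τ ‖x - z‖`. -/

section

variable {𝕜 E F : Type*} [RCLike 𝕜] [NormedAddCommGroup E] [NormedSpace 𝕜 E]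

theorem norm_le_mul_norm_apply_of_forall_norm_apply_eq_one [NormedAddCommGroup F]
    [NormedSpace 𝕜 F] {A : E →L[𝕜] F} (hA : Function.Injective A) {V : Submodule 𝕜 E}
    {σ : ℝ} (hσ : ∀ z ∈ V, ‖A z‖ = 1 → ‖z‖ ≤ σ) {z : E} (hz : z ∈ V) :
    ‖z‖ ≤ σ * ‖A z‖ := by
  by_cases hAz : A z = 0
  · simp [hA (hAz.trans (map_zero A).symm)]
  have hc : 0 < ‖A z‖ := norm_pos_iff.mpr hAz
  have hunit : ‖A ((‖A z‖⁻¹ : 𝕜) • z)‖ = 1 := by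
    rw [map_smul]
    exact norm_smul_inv_norm hAz
  have hle := hσ _ (V.smul_mem _ hz) hunit
  rw [norm_smul, norm_inv, RCLike.norm_ofReal, abs_of_pos hc, inv_mul_le_iff₀ hc] at hle
  linarith

theorem norm_sub_le_of_apply_eq_starProjection [NormedAddCommGroup F] [InnerProductSpace 𝕜 F]
    {A : E →L[𝕜] F} {V : Submodule 𝕜 E} [(V.map (A : E →ₗ[𝕜] F)).HasOrthogonalProjection]
    {σ : ℝ} (hσ : 0 ≤ σ) (hstab : ∀ z ∈ V, ‖z‖ ≤ σ * ‖A z‖) {x u z : E} (hu : u ∈ V)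
    (huA : A u = (V.map (A : E →ₗ[𝕜] F)).starProjection (A x)) (hz : z ∈ V) :
    ‖x - u‖ ≤ ‖x - z‖ + σ * ‖A (x - z)‖ := by
  have hAz : (V.map (A : E →ₗ[𝕜] F)).starProjection (A z) = A z :=
    Submodule.starProjection_eq_self_iff.mpr ⟨z, hz, rfl⟩
  have hproj : A (z - u) = (V.map (A : E →ₗ[𝕜] F)).starProjection (A (z - x)) := by
    rw [map_sub, map_sub, map_sub, huA, hAz]
  have hzu : ‖z - u‖ ≤ σ * ‖A (x - z)‖ := calc
    ‖z - u‖ ≤ σ * ‖A (z - u)‖ := hstab _ (V.sub_mem hz hu)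
    _ ≤ σ * ‖A (x - z)‖ := by
      gcongr
      rw [hproj, ← norm_neg (A (x - z)), ← map_neg, neg_sub]
      exact Submodule.norm_starProjection_apply_le _ _
  calc ‖x - u‖ ≤ ‖x - z‖ + ‖z - u‖ := norm_sub_le_norm_sub_add_norm_sub _ _ _
    _ ≤ ‖x - z‖ + σ * ‖A (x - z)‖ := by gcongr

end

theorem least_squares_method_general
    {X Y : Type*}
    [NormedAddCommGroup X] [InnerProductSpace ℂ X]
    [NormedAddCommGroup Y] [InnerProductSpace ℂ Y]
    (A : X →L[ℂ] Y) (hinj : Function.Injective A)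
    (Xn : Submodule ℂ X) [FiniteDimensional ℂ Xn]
    (σ τ : ℝ)
    (hσ : IsGreatest {r : ℝ | ∃ z ∈ Xn, ‖A z‖ = 1 ∧ ‖z‖ = r} σ)
    (happrox : ∀ x : X, ∃ z ∈ Xn, ‖x - z‖ + σ * ‖A (x - z)‖ ≤ τ * ‖x‖) :
    ∀ b : Y, ∃ u : X, u ∈ Xn ∧
      A u = ((Xn.map A.toLinearMap).orthogonalProjectionOnto b : Y) ∧
      (∀ v : X, v ∈ Xn → A v = ((Xn.map A.toLinearMap).orthogonalProjectionOnto b : Y) → v = u) ∧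
      ‖u‖ ≤ σ * ‖b‖ ∧
      (∀ x : X, A x = b → ∀ z ∈ Xn, ‖x - u‖ ≤ (τ + 1) * ‖x - z‖) := by
  intro b
  have hσ0 : 0 ≤ σ := by
    obtain ⟨z, -, -, rfl⟩ := hσ.1
    exact norm_nonneg z
  have hstab : ∀ z ∈ Xn, ‖z‖ ≤ σ * ‖A z‖ := fun z hz =>
    norm_le_mul_norm_apply_of_forall_norm_apply_eq_one hinj
      (fun z hz hAz => hσ.2 ⟨z, hz, hAz, rfl⟩) hz
  obtain ⟨u, hu, huA⟩ :
      ∃ u ∈ Xn, A u = ((Xn.map A.toLinearMap).orthogonalProjectionOnto b : Y) :=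
    Submodule.mem_map.mp ((Xn.map A.toLinearMap).orthogonalProjectionOnto b).2
  refine ⟨u, hu, huA, fun v _ hvA => hinj (hvA.trans huA.symm), ?_, ?_⟩
  · calc ‖u‖ ≤ σ * ‖A u‖ := hstab u hu
      _ ≤ σ * ‖b‖ := by
        rw [huA]
        gcongr
        exact Submodule.norm_orthogonalProjectionOnto_apply_le _ b
  · rintro x rfl z hz
    obtain ⟨w, hw, hwτ⟩ := happrox (x - z)
    calc ‖x - u‖ ≤ ‖x - (z + w)‖ + σ * ‖A (x - (z + w))‖ :=
          norm_sub_le_of_apply_eq_starProjection hσ0 hstab hu huA (Xn.add_mem hz hw)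
      _ = ‖x - z - w‖ + σ * ‖A (x - z - w)‖ := by rw [sub_add_eq_sub_sub]
      _ ≤ τ * ‖x - z‖ := hwτ
      _ ≤ (τ + 1) * ‖x - z‖ := by gcongr; linarith

/-- least squares method: Let `A : X → Y` be bounded injective between
Hilbert spaces, `X_n ⊆ X` finite-dimensional, `Y_n := A(X_n)`, and suppose
`σ_n = max{‖z‖ : z ∈ X_n, ‖Az‖ = 1}` and there is `τ > 0` with
`min_{z ∈ X_n}(‖x − z‖ + σ_n‖A(x − z)‖) ≤ τ‖x‖` for all `x ∈ X`. Then for every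
`b ∈ Y` the least squares equation `A_n u = Q_n b` has a unique solution `u ∈ X_n`
(i.e. `A_n : X_n → Y_n` is invertible), with `‖u‖ ≤ σ_n ‖b‖`
(so `‖A_n⁻¹Q_n‖ ≤ σ_n`), and if `b = Ax` then
`‖x − u‖ ≤ (τ+1) min{‖x − z‖ : z ∈ X_n}`. -/
theorem least_squares_method
    {X Y : Type*}
    [NormedAddCommGroup X] [InnerProductSpace ℂ X] [CompleteSpace X]
    [NormedAddCommGroup Y] [InnerProductSpace ℂ Y] [CompleteSpace Y]
    (A : X →L[ℂ] Y) (hinj : Function.Injective A)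
    (Xn : Submodule ℂ X) [FiniteDimensional ℂ Xn]
    (σ τ : ℝ)
    (hσ : IsGreatest {r : ℝ | ∃ z ∈ Xn, ‖A z‖ = 1 ∧ ‖z‖ = r} σ)
    (hτ : 0 < τ)
    (happrox : ∀ x : X, ∃ z ∈ Xn, ‖x - z‖ + σ * ‖A (x - z)‖ ≤ τ * ‖x‖) :
    ∀ b : Y, ∃ u : X, u ∈ Xn ∧
      A u = ((Xn.map A.toLinearMap).orthogonalProjectionOnto b : Y) ∧
      (∀ v : X, v ∈ Xn → A v = ((Xn.map A.toLinearMap).orthogonalProjectionOnto b : Y) → v = u) ∧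
      ‖u‖ ≤ σ * ‖b‖ ∧
      (∀ x : X, A x = b → ∀ z ∈ Xn, ‖x - u‖ ≤ (τ + 1) * ‖x - z‖) :=
  least_squares_method_general A hinj Xn σ τ hσ happrox
end

section
/- Let γ : ℝ → ℝ² be a 2π-periodic, three times continuously differentiable curve with |γ'(t)| > 0 for all t. Then the function k(t,s) := −(1/π)(ln(|γ(t) − γ(s)|/|2 sin((t−s)/2)|) + 1/2), defined for t ≠ s (mod 2π), extends continuously to the diagonal with limit lim_{s→t} k(t,s) = −(1/π)(ln|γ'(t)| + 1/2). -/
open Filter Topology Real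

/-! Writing `2 sin ((t - s) / 2) = (t - s) · sinc ((t - s) / 2)`, the quotient inside the logarithm
is `‖slope γ t s‖ / |sinc ((t - s) / 2)|`, which tends to `‖γ' t‖ / sinc 0 = ‖γ' t‖` as `s → t`;
since `γ' t ≠ 0`, the logarithm is continuous there. -/

lemma Real.two_mul_sin_half_eq_mul_sinc (x : ℝ) : 2 * sin (x / 2) = x * sinc (x / 2) := by
  rcases eq_or_ne x 0 with rfl | hx
  · simp
  · rw [sinc_of_ne_zero (div_ne_zero hx two_ne_zero)]
    field_simp

section

variable {E : Type*} [NormedAddCommGroup E] [NormedSpace ℝ E]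

lemma norm_slope_eq_norm_sub_div_abs (f : ℝ → E) (t s : ℝ) :
    ‖slope f t s‖ = ‖f t - f s‖ / |t - s| := by
  rw [slope_def_module, norm_smul, norm_inv, norm_sub_rev (f s), Real.norm_eq_abs, abs_sub_comm,
    inv_mul_eq_div]

lemma norm_sub_div_abs_two_mul_sin_half (f : ℝ → E) (t s : ℝ) :
    ‖f t - f s‖ / |2 * sin ((t - s) / 2)| = ‖slope f t s‖ / |sinc ((t - s) / 2)| := by
  rw [two_mul_sin_half_eq_mul_sinc, abs_mul, norm_slope_eq_norm_sub_div_abs, div_div]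

lemma HasDerivAt.tendsto_norm_sub_div_abs_two_mul_sin_half {f : ℝ → E} {f' : E} {t : ℝ}
    (hf : HasDerivAt f f' t) :
    Tendsto (fun s => ‖f t - f s‖ / |2 * Real.sin ((t - s) / 2)|) (𝓝[≠] t) (𝓝 ‖f'‖) := by
  have hslope : Tendsto (fun s => ‖slope f t s‖) (𝓝[≠] t) (𝓝 ‖f'‖) :=
    (hasDerivAt_iff_tendsto_slope.mp hf).norm
  have hsinc : Tendsto (fun s => |sinc ((t - s) / 2)|) (𝓝[≠] t) (𝓝 1) := by
    have : Continuous fun s => |sinc ((t - s) / 2)| := by fun_prop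
    simpa using (this.tendsto t).mono_left nhdsWithin_le_nhds
  rw [← div_one ‖f'‖]
  simp_rw [norm_sub_div_abs_two_mul_sin_half]
  exact hslope.div hsinc one_ne_zero

end

theorem kernel_diagonal_limit_general
    (γ : ℝ → EuclideanSpace ℝ (Fin 2))
    (hreg : ∀ t, deriv γ t ≠ 0)
    (t : ℝ) :
    Tendsto (fun s : ℝ =>
        -(1 / Real.pi) *
          (Real.log (‖γ t - γ s‖ / |2 * Real.sin ((t - s) / 2)|) + 1 / 2))
      (nhdsWithin t {t}ᶜ)
      (nhds (-(1 / Real.pi) * (Real.log ‖deriv γ t‖ + 1 / 2))) := by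
  have hderiv : HasDerivAt γ (deriv γ t) t :=
    (differentiableAt_of_deriv_ne_zero (hreg t)).hasDerivAt
  have hlog := (continuousAt_log (norm_ne_zero_iff.mpr (hreg t))).tendsto.comp
    (HasDerivAt.tendsto_norm_sub_div_abs_two_mul_sin_half hderiv)
  exact (hlog.add_const _).const_mul _

/-- Let `γ : ℝ → ℝ²` be a `2π`-periodic, three times continuously
differentiable simple closed curve with `|γ'(t)| > 0`. Then
`k(t,s) := −(1/π)(ln(|γ(t) − γ(s)|/|2 sin((t−s)/2)|) + 1/2)`, defined for
`s ≠ t`, extends continuously to the diagonal with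
`lim_{s→t} k(t,s) = −(1/π)(ln|γ'(t)| + 1/2)`. -/
theorem kernel_diagonal_limit
    (γ : ℝ → EuclideanSpace ℝ (Fin 2))
    (hsmooth : ContDiff ℝ 3 γ)
    (hper : Function.Periodic γ (2 * Real.pi))
    (hreg : ∀ t, deriv γ t ≠ 0)
    (hsimple : ∀ t s : ℝ, γ t = γ s → ∃ m : ℤ, t - s = 2 * Real.pi * m)
    (t : ℝ) :
    Tendsto (fun s : ℝ =>
        -(1 / Real.pi) *
          (Real.log (‖γ t - γ s‖ / |2 * Real.sin ((t - s) / 2)|) + 1 / 2))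
      (nhdsWithin t {t}ᶜ)
      (nhds (-(1 / Real.pi) * (Real.log ‖deriv γ t‖ + 1 / 2))) :=
  kernel_diagonal_limit_general γ hreg t
end

section
/- With γ and k as above (γ ∈ C³, 2π-periodic, |γ'| > 0, simple), the partial derivative ∂k/∂t(t,s) extends continuously to the diagonal with lim_{s→t} ∂k/∂t(t,s) = −(1/(2π)) (γ'(t)·γ''(t))/|γ'(t)|². -/
open Filter Topology Real
open scoped RealInnerProductSpace

/-!
Put `v = γ' t`, `w = γ'' t` and let `q s = (γ s - γ t) / (s - t)` be the difference quotient.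
Taylor's formula gives `q s → v` and `(q s - v) / (s - t) → w / 2`, and the identity
`⟪γ s - γ t, v⟫ / ‖γ s - γ t‖² - 1 / (s - t) = -⟪q s, (q s - v) / (s - t)⟫ / ‖q s‖²`
shows that the chord term of `∂k/∂t` is `1 / (t - s) + ⟪v, w⟫ / (2‖v‖²) + o(1)`.
The cotangent term is `1 / (t - s) + o(1)` (the same identity applied to `sin`, whose second
derivative vanishes at `0`), so the two poles cancel.
-/

theorem taylor_tendsto_two_of_hasDerivAt {E : Type*} [NormedAddCommGroup E] [NormedSpace ℝ E]
    {f f' : ℝ → E} {x₀ : ℝ} {a : E} (hf : ∀ x, HasDerivAt f (f' x) x)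
    (hf' : HasDerivAt f' a x₀) :
    Tendsto (fun x => ((x - x₀) ^ 2)⁻¹ • (f x - f x₀ - (x - x₀) • f' x₀)) (𝓝[≠] x₀)
      (𝓝 ((2 : ℝ)⁻¹ • a)) := by
  set g : ℝ → E := fun x => f x - (x - x₀) • f' x₀ - ((x - x₀) ^ 2 / 2) • a
  have hg : ∀ x, HasDerivAt g (f' x - f' x₀ - (x - x₀) • a) x := by
    intro x
    have hq : HasDerivAt (fun x : ℝ => (x - x₀) ^ 2 / 2) (x - x₀) x := by
      simpa using (((hasDerivAt_id x).sub_const x₀).pow 2).div_const 2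
    simpa using ((hf x).fun_sub (((hasDerivAt_id x).sub_const x₀).smul_const (f' x₀))).fun_sub
      (hq.smul_const a)
  have hremainder : (fun x => g x - g x₀) =o[𝓝 x₀] fun x => (x - x₀) ^ 2 := by
    simpa using Convex.isLittleO_pow_succ_real (n := 1) convex_univ (Set.mem_univ x₀)
      (fun x _ => (hg x).hasDerivWithinAt) (by simpa using hf'.isLittleO)
  refine ((hremainder.tendsto_inv_smul_nhds_zero.mono_left nhdsWithin_le_nhds).add_const
    ((2 : ℝ)⁻¹ • a)).congr' ?_ |>.trans (by rw [zero_add])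
  filter_upwards [self_mem_nhdsWithin] with x hx
  have hx : x - x₀ ≠ 0 := sub_ne_zero.mpr hx
  have hc : ((x - x₀) ^ 2)⁻¹ * ((x - x₀) ^ 2 / 2) = 2⁻¹ := by field_simp
  simp only [g, sub_self, zero_pow two_ne_zero, zero_div, zero_smul, sub_zero, smul_sub,
    smul_smul, hc]
  abel

section InnerProductSpace

variable {F : Type*} [NormedAddCommGroup F] [InnerProductSpace ℝ F]

theorem tendsto_inner_div_norm_sq_sub_inv {f : ℝ → F} {x₀ : ℝ} {v a : F} (hv : v ≠ 0)
    (hf : Tendsto (fun x => ((x - x₀) ^ 2)⁻¹ • (f x - f x₀ - (x - x₀) • v)) (𝓝[≠] x₀) (𝓝 a)) :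
    Tendsto (fun x => ⟪f x - f x₀, v⟫ / ‖f x - f x₀‖ ^ 2 - (x - x₀)⁻¹) (𝓝[≠] x₀)
      (𝓝 (-(⟪v, a⟫ / ‖v‖ ^ 2))) := by
  set q : ℝ → F := slope f x₀ with hq_def
  have hr : Tendsto (fun x => (x - x₀)⁻¹ • (q x - v)) (𝓝[≠] x₀) (𝓝 a) := by
    refine hf.congr' ?_
    filter_upwards [self_mem_nhdsWithin] with x hx
    have hx : x - x₀ ≠ 0 := sub_ne_zero.mpr hx
    rw [hq_def, slope_def_module]
    match_scalars <;> field_simp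
  have hq : Tendsto q (𝓝[≠] x₀) (𝓝 v) := by
    have hsub : Tendsto (fun x => x - x₀) (𝓝[≠] x₀) (𝓝 0) :=
      tendsto_sub_nhds_zero_iff.mpr nhdsWithin_le_nhds
    have := (hsub.smul hr).add_const v
    rw [zero_smul, zero_add] at this
    refine this.congr' ?_
    filter_upwards [self_mem_nhdsWithin] with x hx
    rw [smul_inv_smul₀ (sub_ne_zero.mpr hx), sub_add_cancel]
  have hqv : ‖v‖ ^ 2 ≠ 0 := by positivity
  refine ((hq.inner hr).div (hq.norm.pow 2) hqv).neg.congr' ?_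
  filter_upwards [self_mem_nhdsWithin, hq.eventually_ne hv] with x hx hq0
  have hx : x - x₀ ≠ 0 := sub_ne_zero.mpr hx
  have hfq : f x - f x₀ = (x - x₀) • q x := by
    rw [hq_def, slope_def_module, smul_inv_smul₀ hx]
  have hqx : ‖q x‖ ≠ 0 := norm_ne_zero_iff.mpr hq0
  simp only [Pi.div_apply]
  rw [hfq, inner_smul_left, inner_smul_right, norm_smul, inner_sub_right,
    real_inner_self_eq_norm_sq, real_inner_comm]
  simp only [conj_trivial, Real.norm_eq_abs, mul_pow, sq_abs]
  field_simp
  ring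

theorem tendsto_inv_sub_cot : Tendsto (fun x => x⁻¹ - cot x) (𝓝[≠] 0) (𝓝 0) := by
  have hcsc : Tendsto (fun x => (sin x)⁻¹ - x⁻¹) (𝓝[≠] 0) (𝓝 0) := by
    have htaylor := taylor_tendsto_two_of_hasDerivAt hasDerivAt_sin (hasDerivAt_cos 0)
    rw [cos_zero] at htaylor
    simpa [pow_two, div_self_mul_self'] using
      tendsto_inner_div_norm_sq_sub_inv one_ne_zero htaylor
  have hcos : Tendsto (fun x => (cos x - 1) * x⁻¹) (𝓝[≠] 0) (𝓝 0) := by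
    have hslope := (hasDerivAt_cos 0).tendsto_slope
    rw [sin_zero, neg_zero] at hslope
    refine hslope.congr fun x => ?_
    rw [slope_def_field, cos_zero, sub_zero, div_eq_mul_inv]
  have := ((continuous_cos.tendsto 0).mono_left nhdsWithin_le_nhds).mul hcsc |>.add hcos
  rw [mul_zero, add_zero] at this
  refine (this.neg.congr fun x => ?_).trans (by rw [neg_zero])
  rw [cot_eq_cos_div_sin]
  ring

theorem hasDerivAt_log_norm_sub_div_abs_two_sin {γ : ℝ → F} {γ' : F} {t s : ℝ}
    (hγ : HasDerivAt γ γ' t) (hne : γ t ≠ γ s) (hsin : sin ((t - s) / 2) ≠ 0) :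
    HasDerivAt (fun u => log (‖γ u - γ s‖ / |2 * sin ((u - s) / 2)|))
      (⟪γ t - γ s, γ'⟫ / ‖γ t - γ s‖ ^ 2 - cot ((t - s) / 2) / 2) t := by
  have hchord : HasDerivAt (fun u => log (‖γ u - γ s‖ ^ 2))
      (2 * ⟪γ t - γ s, γ'⟫ / ‖γ t - γ s‖ ^ 2) t :=
    (hγ.sub_const (γ s)).norm_sq.log (by simpa [sub_eq_zero] using hne)
  have harc : HasDerivAt (fun u => log (2 * sin ((u - s) / 2)))
      (2 * (cos ((t - s) / 2) * (1 / 2)) / (2 * sin ((t - s) / 2))) t := by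
    have := ((hasDerivAt_id t).sub_const s).div_const 2
    exact ((this.sin).const_mul 2).log (mul_ne_zero two_ne_zero hsin)
  have hsplit : (fun u => 2⁻¹ * log (‖γ u - γ s‖ ^ 2) - log (2 * sin ((u - s) / 2)))
      =ᶠ[𝓝 t] fun u => log (‖γ u - γ s‖ / |2 * sin ((u - s) / 2)|) := by
    have hsin_cont : Continuous fun u => sin ((u - s) / 2) := by fun_prop
    filter_upwards [hγ.continuousAt.eventually_ne hne,
      hsin_cont.continuousAt.eventually_ne hsin] with u hu hsinu
    rw [log_div (by simpa [sub_eq_zero] using hu) (by simpa using hsinu), log_abs, log_pow]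
    ring
  refine (((hchord.const_mul 2⁻¹).sub harc).congr_of_eventuallyEq hsplit.symm).congr_deriv ?_
  rw [cot_eq_cos_div_sin]
  field_simp

theorem tendsto_half_sub_nhdsNE (t : ℝ) :
    Tendsto (fun s => (t - s) / 2) (𝓝[≠] t) (𝓝[≠] 0) := by
  simpa using (((hasDerivAt_id t).const_sub t).div_const 2).tendsto_nhdsNE (by norm_num)

theorem tendsto_inner_div_norm_sq_sub_half_cot {γ γ' : ℝ → F} {t : ℝ} {a : F}
    (hγ : ∀ x, HasDerivAt γ (γ' x) x) (hγ' : HasDerivAt γ' a t) (hv : γ' t ≠ 0) :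
    Tendsto (fun s => ⟪γ t - γ s, γ' t⟫ / ‖γ t - γ s‖ ^ 2 - cot ((t - s) / 2) / 2) (𝓝[≠] t)
      (𝓝 (⟪γ' t, a⟫ / (2 * ‖γ' t‖ ^ 2))) := by
  have hchord := tendsto_inner_div_norm_sq_sub_inv hv (taylor_tendsto_two_of_hasDerivAt hγ hγ')
  have := hchord.neg.add ((tendsto_inv_sub_cot.comp (tendsto_half_sub_nhdsNE t)).div_const 2)
  convert this using 2 with s
  · have hinv : ((t - s) / 2)⁻¹ / 2 = -(s - t)⁻¹ := by
      rw [inv_div, div_div_cancel_left' two_ne_zero, ← neg_sub s t, inv_neg]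
    simp only [Function.comp_apply, sub_div _ (cot _), hinv]
    rw [← neg_sub (γ s), inner_neg_left, norm_neg]
    ring
  · rw [inner_smul_right]
    ring

end InnerProductSpace

theorem kernel_deriv_diagonal_limit_general
    (γ : ℝ → EuclideanSpace ℝ (Fin 2))
    (hsmooth : ContDiff ℝ 3 γ)
    (hreg : ∀ t, deriv γ t ≠ 0)
    (t : ℝ) :
    Tendsto (fun s : ℝ =>
        deriv (fun u : ℝ =>
          -(1 / Real.pi) *
            (Real.log (‖γ u - γ s‖ / |2 * Real.sin ((u - s) / 2)|) + 1 / 2)) t)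
      (nhdsWithin t {t}ᶜ)
      (nhds (-(1 / (2 * Real.pi)) *
        ((inner ℝ (deriv γ t) (deriv (deriv γ) t) : ℝ) / ‖deriv γ t‖ ^ 2))) := by
  have hγ : ∀ x, HasDerivAt γ (deriv γ x) x :=
    fun x => (hsmooth.differentiable (by norm_num) x).hasDerivAt
  have hγ' : HasDerivAt (deriv γ) (deriv (deriv γ) t) t :=
    ((hsmooth.iterate_deriv' 2 1).differentiable (by norm_num) t).hasDerivAt
  have hsin : ∀ᶠ s in 𝓝[≠] t, sin ((t - s) / 2) ≠ 0 :=
    (tendsto_half_sub_nhdsNE t).eventually ((hasDerivAt_sin 0).eventually_ne (by simp))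
  have hlim := (tendsto_inner_div_norm_sq_sub_half_cot hγ hγ' (hreg t)).const_mul (-(1 / π))
  rw [show -(1 / π) * (⟪deriv γ t, deriv (deriv γ) t⟫ / (2 * ‖deriv γ t‖ ^ 2)) =
    -(1 / (2 * π)) * (⟪deriv γ t, deriv (deriv γ) t⟫ / ‖deriv γ t‖ ^ 2) by ring] at hlim
  refine hlim.congr' ?_
  filter_upwards [(hγ t).eventually_ne (c := γ t) (hreg t), hsin] with s hne hsin
  exact (((hasDerivAt_log_norm_sub_div_abs_two_sin (hγ t) hne.symm hsin).add_const
    (1 / 2)).const_mul (-(1 / π))).deriv.symm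

/-- With `γ ∈ C³` a `2π`-periodic simple closed curve, `|γ'| > 0`, and
`k(t,s) = −(1/π)(ln(|γ(t)−γ(s)|/|2 sin((t−s)/2)|) + 1/2)` (for `s ≠ t`), the partial
derivative `∂k/∂t(t,s)` extends continuously to the diagonal with
`lim_{s→t} ∂k/∂t(t,s) = −(1/(2π)) (γ'(t)·γ''(t))/|γ'(t)|²`. -/
theorem kernel_deriv_diagonal_limit
    (γ : ℝ → EuclideanSpace ℝ (Fin 2))
    (hsmooth : ContDiff ℝ 3 γ)
    (hper : Function.Periodic γ (2 * Real.pi))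
    (hreg : ∀ t, deriv γ t ≠ 0)
    (hsimple : ∀ t s : ℝ, γ t = γ s → ∃ m : ℤ, t - s = 2 * Real.pi * m)
    (t : ℝ) :
    Tendsto (fun s : ℝ =>
        deriv (fun u : ℝ =>
          -(1 / Real.pi) *
            (Real.log (‖γ u - γ s‖ / |2 * Real.sin ((u - s) / 2)|) + 1 / 2)) t)
      (nhdsWithin t {t}ᶜ)
      (nhds (-(1 / (2 * Real.pi)) *
        ((inner ℝ (deriv γ t) (deriv (deriv γ) t) : ℝ) / ‖deriv γ t‖ ^ 2))) :=
  kernel_deriv_diagonal_limit_general γ hsmooth hreg t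
end
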